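/- Voting-based recovery certification (margin condition): fix finite index types ι and κ, a label type Y, a classifier f : Matrix ι κ ℝ → Y, a finite set B of binary ablation matrices, an image x, a label y_maj, and Δ : ℕ. Let p be a binary patch region with |{b ∈ B : b not disjoint from p}| ≤ Δ. If for every label y ≠ y_maj we have |{b ∈ B : f(ablated mutant of x under b) = y_maj}| > |{b ∈ B : f(ablated mutant of x under b) = y}| + 2Δ, then for every p-malicious version x' of x and every label y ≠ y_maj, |{b ∈ B : f(ablated mutant of x' under b) = y_maj}| > |{b ∈ B : f(ablated mutant of x' under b) = y}|. -/

import Mathlib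

/-- A binary matrix: all entries are 0 or 1. -/
def IsBinary {ι κ : Type*} (a : Matrix ι κ ℝ) : Prop :=
  ∀ i j, a i j = 0 ∨ a i j = 1

/-- The ablation `b` is disjoint from the patch region `p`. -/
def DisjointFrom {ι κ : Type*} (b p : Matrix ι κ ℝ) : Prop :=
  ∀ i j, b i j * p i j = 0

/-- `x'` is a `p`-malicious version of `x`. -/
def MaliciousVersion {ι κ : Type*} (p x x' : Matrix ι κ ℝ) : Prop :=
  ∀ i j, p i j = 0 → x' i j = x i j

/-! Outside the at most `Δ` ablations that meet the patch, the ablated mutants of `x` and of a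
`p`-malicious `x'` coincide, so each label's vote count moves by at most `Δ`; a margin above `2Δ`
therefore survives. -/

theorem ncard_votes_le_add_ncard {α Y : Type*} {B : Set α} (hB : B.Finite) {g g' : α → Y}
    {P : α → Prop} (hagree : ∀ b ∈ B, ¬ P b → g b = g' b) (y : Y) :
    {b | b ∈ B ∧ g' b = y}.ncard ≤ {b | b ∈ B ∧ g b = y}.ncard + {b | b ∈ B ∧ P b}.ncard := by
  have hsub : {b | b ∈ B ∧ g' b = y} ⊆ {b | b ∈ B ∧ g b = y} ∪ {b | b ∈ B ∧ P b} := by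
    rintro b ⟨hb, hvote⟩
    by_cases hP : P b
    · exact Or.inr ⟨hb, hP⟩
    · exact Or.inl ⟨hb, (hagree b hb hP).trans hvote⟩
  have hfin : ({b | b ∈ B ∧ g b = y} ∪ {b | b ∈ B ∧ P b}).Finite :=
    hB.subset (Set.union_subset (fun _ hb => hb.1) (fun _ hb => hb.1))
  exact (Set.ncard_le_ncard hsub hfin).trans (Set.ncard_union_le _ _)

theorem ncard_votes_lt_of_margin {α Y : Type*} {B : Set α} (hB : B.Finite) {g g' : α → Y}
    {P : α → Prop} (hagree : ∀ b ∈ B, ¬ P b → g b = g' b) {Δ : ℕ}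
    (hΔ : {b | b ∈ B ∧ P b}.ncard ≤ Δ) {y₀ y : Y}
    (hmargin : {b | b ∈ B ∧ g b = y₀}.ncard > {b | b ∈ B ∧ g b = y}.ncard + 2 * Δ) :
    {b | b ∈ B ∧ g' b = y₀}.ncard > {b | b ∈ B ∧ g' b = y}.ncard := by
  have hgain := ncard_votes_le_add_ncard hB hagree y
  have hloss := ncard_votes_le_add_ncard hB (fun b hb hP => (hagree b hb hP).symm) y₀
  omega

theorem ablate_eq_of_disjointFrom {ι κ : Type*} {p x x' b : Matrix ι κ ℝ}
    (hx' : MaliciousVersion p x x') (hb : DisjointFrom b p) :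
    (fun i j => x i j * b i j) = fun i j => x' i j * b i j := by
  funext i j
  rcases eq_or_ne (b i j) 0 with hb0 | hb0
  · simp only [hb0, mul_zero]
  · rw [hx' i j ((mul_eq_zero.mp (hb i j)).resolve_left hb0)]

theorem voting_recovery_certification_general {ι κ : Type*} {Y : Type*}
    (f : Matrix ι κ ℝ → Y)
    (B : Set (Matrix ι κ ℝ)) (hBfin : B.Finite)
    (x : Matrix ι κ ℝ) (y_maj : Y) (Δ : ℕ)
    (p : Matrix ι κ ℝ)
    (hΔ : {b | b ∈ B ∧ ¬ DisjointFrom b p}.ncard ≤ Δ)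
    (hmargin : ∀ y : Y, y ≠ y_maj →
      {b | b ∈ B ∧ f (fun i j => x i j * b i j) = y_maj}.ncard >
        {b | b ∈ B ∧ f (fun i j => x i j * b i j) = y}.ncard + 2 * Δ) :
    ∀ x' : Matrix ι κ ℝ, MaliciousVersion p x x' →
      ∀ y : Y, y ≠ y_maj →
        {b | b ∈ B ∧ f (fun i j => x' i j * b i j) = y_maj}.ncard >
          {b | b ∈ B ∧ f (fun i j => x' i j * b i j) = y}.ncard := by
  intro x' hx' y hy
  exact ncard_votes_lt_of_margin hBfin
    (fun b _ hb => congrArg f (ablate_eq_of_disjointFrom hx' (not_not.mp hb))) hΔ (hmargin y hy)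

/-- Voting-based recovery certification (margin condition). -/
theorem voting_recovery_certification {ι κ : Type*} [Fintype ι] [Fintype κ] {Y : Type*}
    (f : Matrix ι κ ℝ → Y)
    (B : Set (Matrix ι κ ℝ)) (hBfin : B.Finite) (hB : ∀ b ∈ B, IsBinary b)
    (x : Matrix ι κ ℝ) (y_maj : Y) (Δ : ℕ)
    (p : Matrix ι κ ℝ) (hp : IsBinary p)
    (hΔ : {b | b ∈ B ∧ ¬ DisjointFrom b p}.ncard ≤ Δ)
    (hmargin : ∀ y : Y, y ≠ y_maj →
      {b | b ∈ B ∧ f (fun i j => x i j * b i j) = y_maj}.ncard >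
        {b | b ∈ B ∧ f (fun i j => x i j * b i j) = y}.ncard + 2 * Δ) :
    ∀ x' : Matrix ι κ ℝ, MaliciousVersion p x x' →
      ∀ y : Y, y ≠ y_maj →
        {b | b ∈ B ∧ f (fun i j => x' i j * b i j) = y_maj}.ncard >
          {b | b ∈ B ∧ f (fun i j => x' i j * b i j) = y}.ncard :=
  voting_recovery_certification_general f B hBfin x y_maj Δ p hΔ hmargin
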